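/- arXiv:2106.10541 — 2 statements merged into one kernel-verified Lean document; each statement's English description precedes it below -/
import Mathlib

section
/- The word 11 over the binary alphabet is Hamming-isometric: for every n and every pair of words u, v of length n avoiding the factor 11, u can be transformed into v by changing one differing bit at a time so that every intermediate word also avoids the factor 11. -/
open Finset

/-- The factor `f` occurs in `u` at position `j`. -/
def occursAt {A : Type*} {l n : ℕ} (f : Fin l → A) (u : Fin n → A) (j : ℕ) : Prop :=
  ∃ h : j + l ≤ n, ∀ i : Fin l, u ⟨j + i.1, by have := i.isLt; omega⟩ = f i

/-- `u` is `f`-free: `f` is not a contiguous factor of `u`. -/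
def Free {A : Type*} {l n : ℕ} (f : Fin l → A) (u : Fin n → A) : Prop :=
  ∀ j : ℕ, ¬ occursAt f u j

/-- There is an `f`-free transformation from `u` to `v`: a sequence of words starting at `u`,
ending at `v`, each obtained from the previous by changing one position where it differs
from `v` to the letter of `v`, all words being `f`-free. -/
def FreeTransform {A : Type*} [DecidableEq A] {l n : ℕ} (f : Fin l → A)
    (u v : Fin n → A) : Prop :=
  ∃ w : Fin (hammingDist u v + 1) → Fin n → A,
    w 0 = u ∧ w (Fin.last _) = v ∧ (∀ j, Free f (w j)) ∧
    ∀ j : Fin (hammingDist u v),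
      ∃ p : Fin n, w j.castSucc p ≠ v p ∧ w j.succ = Function.update (w j.castSucc) p (v p)

/-- `f` is Hamming-isometric. -/
def HammingIsometric {A : Type*} [DecidableEq A] {l : ℕ} (f : Fin l → A) : Prop :=
  ∀ (n : ℕ) (u v : Fin n → A), Free f u → Free f v → FreeTransform f u v

/-- `u` has a `k`-error border: a proper prefix and suffix of the same positive length `m`
at Hamming distance exactly `k`. -/
def hasKErrorBorder {A : Type*} [DecidableEq A] {n : ℕ} (u : Fin n → A) (k : ℕ) : Prop :=
  ∃ m : ℕ, 0 < m ∧ ∃ h : m < n,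
    hammingDist (fun i : Fin m => u ⟨i.1, by have := i.isLt; omega⟩)
      (fun i : Fin m => u ⟨n - m + i.1, by have := i.isLt; omega⟩) = k

/-- Lee distance between letters of `ZMod d`. -/
def leeDistL {d : ℕ} [NeZero d] (a b : ZMod d) : ℕ :=
  min (max (a.val - b.val) (b.val - a.val)) (d - max (a.val - b.val) (b.val - a.val))

/-- Lee distance between words of length `n` over `ZMod d`. -/
def leeDist {d n : ℕ} [NeZero d] (u v : Fin n → ZMod d) : ℕ :=
  ∑ i, leeDistL (u i) (v i)

/-- `u` has a `k`-Lee-error border. -/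
def hasKLeeErrorBorder {d n : ℕ} [NeZero d] (u : Fin n → ZMod d) (k : ℕ) : Prop :=
  ∃ m : ℕ, 0 < m ∧ ∃ h : m < n,
    leeDist (fun i : Fin m => u ⟨i.1, by have := i.isLt; omega⟩)
      (fun i : Fin m => u ⟨n - m + i.1, by have := i.isLt; omega⟩) = k

/-- The `d`-ary `n`-cube `Q_n^d`. -/
def QGraph (n d : ℕ) : SimpleGraph (Fin n → ZMod d) where
  Adj u v := ∃ i, u i ≠ v i ∧ (v i = u i + 1 ∨ v i = u i - 1) ∧ ∀ j, j ≠ i → u j = v j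
  symm := by
    constructor
    rintro u v ⟨i, hne, hpm, hrest⟩
    refine ⟨i, hne.symm, ?_, fun j hj => (hrest j hj).symm⟩
    rcases hpm with h | h
    · right; rw [h]; ring
    · left; rw [h]; ring
  loopless := by constructor; rintro u ⟨i, hne, -⟩; exact hne rfl

/-- `f` is Lee-isometric: for all `n`, the subgraph of `Q_n^d` induced on `f`-free words
is isometric in `Q_n^d`. -/
def LeeIsometric {l d : ℕ} (f : Fin l → ZMod d) : Prop :=
  ∀ (n : ℕ) (u v : Fin n → ZMod d) (hu : Free f u) (hv : Free f v),
    ((QGraph n d).induce {w | Free f w}).dist ⟨u, hu⟩ ⟨v, hv⟩ = (QGraph n d).dist u v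

/-!
If every letter of `f` is the top of a linear order, then `f`-freeness passes to pointwise
smaller words. To move from `u` towards `v`, correct a position where `v` is below `u`, if there
is one: the new word lies below `u`. Otherwise `u ≤ v`, and correcting any position where they
differ gives a word below `v`. Either way the new word is `f`-free and one step closer to `v`.
-/

open Function

theorem hammingDist_update_add_one {ι : Type*} [Fintype ι] [DecidableEq ι] {β : ι → Type*}
    [∀ i, DecidableEq (β i)] {x y : ∀ i, β i} {i : ι} (h : x i ≠ y i) :
    hammingDist (update x i (y i)) y + 1 = hammingDist x y := by
  have herase : ({j | update x i (y i) j ≠ y j} : Finset ι) =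
      ({j | x j ≠ y j} : Finset ι).erase i := by
    ext j
    by_cases hj : j = i <;> simp [hj]
  rw [hammingDist, herase, card_erase_add_one (by simpa using h), hammingDist]

theorem exists_ne_update_le_or_le {ι A : Type*} [DecidableEq ι] [LinearOrder A] {u v : ι → A}
    (h : u ≠ v) : ∃ p, u p ≠ v p ∧ (update u p (v p) ≤ u ∨ update u p (v p) ≤ v) := by
  by_cases hdown : ∃ q, v q < u q
  · obtain ⟨q, hq⟩ := hdown
    exact ⟨q, hq.ne', Or.inl (update_le_iff.2 ⟨hq.le, fun _ _ => le_rfl⟩)⟩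
  · simp only [not_exists, not_lt] at hdown
    obtain ⟨p, hp⟩ := Function.ne_iff.mp h
    exact ⟨p, hp, Or.inr (update_le_iff.2 ⟨le_rfl, fun j _ => hdown j⟩)⟩

section Factor

variable {A : Type*} {l n : ℕ} {f : Fin l → A}

theorem Free.of_le [PartialOrder A] [OrderTop A] (hf : ∀ i, f i = ⊤) {u w : Fin n → A}
    (huw : u ≤ w) (hw : Free f w) : Free f u := by
  rintro j ⟨hj, hocc⟩
  refine hw j ⟨hj, fun i => ?_⟩
  rw [hf i, ← top_le_iff, ← hf i, ← hocc i]
  exact huw _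

section Transform

variable [DecidableEq A]

theorem FreeTransform.refl {u : Fin n → A} (hu : Free f u) : FreeTransform f u u := by
  refine ⟨fun _ => u, rfl, rfl, fun _ => hu, fun j => ?_⟩
  rw [hammingDist_self] at j
  exact j.elim0

theorem FreeTransform.of_update {u v : Fin n → A} {p : Fin n} (hp : u p ≠ v p) (hu : Free f u)
    (h : FreeTransform f (update u p (v p)) v) : FreeTransform f u v := by
  obtain ⟨w, hw0, hwl, hwf, hws⟩ := h
  have hd : hammingDist u v = hammingDist (update u p (v p)) v + 1 :=
    (hammingDist_update_add_one hp).symm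
  refine ⟨fun i => (Fin.cons u w : Fin (_ + 1) → Fin n → A) (i.cast (congrArg (· + 1) hd)),
    by simp, by simp [hwl], fun i => ?_, fun j => ?_⟩
  · beta_reduce
    generalize i.cast _ = k
    exact Fin.cases hu hwf k
  obtain ⟨k, rfl⟩ : ∃ k, j = Fin.cast hd.symm k := ⟨Fin.cast hd j, by simp⟩
  cases k using Fin.cases with
  | zero => exact ⟨p, hp, by simp [hw0]⟩
  | succ k => simpa using hws k

end Transform

theorem hammingIsometric_of_forall_eq_top [LinearOrder A] [OrderTop A] (hf : ∀ i, f i = ⊤) :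
    HammingIsometric f := by
  intro n u v hu hv
  induction hd : hammingDist u v generalizing u with
  | zero => exact hammingDist_eq_zero.mp hd ▸ FreeTransform.refl hu
  | succ d ih =>
    have hne : u ≠ v := hammingDist_pos.mp (by omega)
    obtain ⟨p, hp, hle⟩ := exists_ne_update_le_or_le hne
    have hfree : Free f (update u p (v p)) := hle.elim (hu.of_le hf ·) (hv.of_le hf ·)
    have hdist := hammingDist_update_add_one hp
    exact FreeTransform.of_update hp hu (ih _ hfree (by omega))

end Factor

theorem stmt5 : HammingIsometric (![1,1] : Fin 2 → Fin 2) :=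
  hammingIsometric_of_forall_eq_top (by decide)
end

section
/- The word 1010011 over the binary alphabet is not Hamming-isometric. -/
open Finset

/-! The words `u = 1010010011` and `v = 1011011011` are `1010011`-free and differ exactly in
positions 3 and 6, but flipping either of these positions in `u` creates an occurrence of
`1010011` (at position 3, respectively 0). So no free transformation from `u` to `v` can
even make its first step. -/

instance occursAt.decidable {A : Type*} [DecidableEq A] {l n : ℕ} (f : Fin l → A)
    (u : Fin n → A) (j : ℕ) : Decidable (occursAt f u j) :=
  if h : j + l ≤ n then
    decidable_of_iff (∀ i : Fin l, u ⟨j + i.1, by have := i.isLt; omega⟩ = f i)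
      ⟨fun h' => ⟨h, h'⟩, fun ⟨_, h'⟩ => h'⟩
  else isFalse fun ⟨h', _⟩ => h h'

theorem free_iff_forall_fin_succ {A : Type*} {l n : ℕ} (f : Fin l → A) (u : Fin n → A) :
    Free f u ↔ ∀ j : Fin (n + 1), ¬ occursAt f u j :=
  ⟨fun h j => h j, fun h j hj => h ⟨j, by obtain ⟨hle, -⟩ := hj; omega⟩ hj⟩

instance Free.decidable {A : Type*} [DecidableEq A] {l n : ℕ} (f : Fin l → A)
    (u : Fin n → A) : Decidable (Free f u) :=
  decidable_of_iff _ (free_iff_forall_fin_succ f u).symm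

theorem FreeTransform.exists_free_update {A : Type*} [DecidableEq A] {l n : ℕ}
    {f : Fin l → A} {u v : Fin n → A} (h : FreeTransform f u v) (hne : u ≠ v) :
    ∃ p, u p ≠ v p ∧ Free f (Function.update u p (v p)) := by
  obtain ⟨w, hw0, -, hfree, hstep⟩ := h
  have hpos : 0 < hammingDist u v := hammingDist_pos.mpr hne
  obtain ⟨p, hp, hupdate⟩ := hstep ⟨0, hpos⟩
  have hfirst : w (Fin.castSucc ⟨0, hpos⟩) = u := hw0
  rw [hfirst] at hp hupdate
  exact ⟨p, hp, hupdate ▸ hfree _⟩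

theorem stmt6 : ¬ HammingIsometric (![1,0,1,0,0,1,1] : Fin 7 → Fin 2) := by
  intro h
  let u : Fin 10 → Fin 2 := ![1,0,1,0,0,1,0,0,1,1]
  let v : Fin 10 → Fin 2 := ![1,0,1,1,0,1,1,0,1,1]
  have hblocked : ∀ p, u p ≠ v p →
      ¬ Free (![1,0,1,0,0,1,1] : Fin 7 → Fin 2) (Function.update u p (v p)) := by
    decide
  obtain ⟨p, hp, hfree⟩ :=
    (h 10 u v (by decide) (by decide)).exists_free_update (by decide)
  exact hblocked p hp hfree
end
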